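/- Given an initial proposal vector I, if there exists any stable marriage G' with G' ≤ I, then there exists a unique greatest stable marriage H ≤ I, and H minimizes the L1 distance to I among all stable marriages ≤ I. -/

import Mathlib

/-!
The componentwise maximum of two stable marriages `G, G'` is again stable. The only delicate
point is that no two men collide in `G ⊔ G'`: call a man an improver if he proposes strictly
earlier in `G'` than in `G`. Stability of both marriages forces the woman an improver proposes
to in `G'` to be held in `G` by another improver, so `ρ G'` maps the improvers into the
`ρ G`-image of the improvers; both maps are injective, so the two images coincide, and a woman
held in `G` by an improver is never the `G'`-partner of a man who prefers his `G`-proposal.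

Hence the stable marriages below `I` form a finite, nonempty, sup-closed set, whose greatest
element is the `H` of the theorem; on vectors below `I` the `L¹` distance to `I` is antitone.
-/

open Finset

/-- A stable marriage instance: `m` men, `w` women, complete strict preference lists.
`mpref i k` is the woman at rank `k` (rank `0` = most preferred) on man `i`'s list.
`wrank q p` is the rank of man `p` on woman `q`'s list (smaller = more preferred). -/
structure SM (m w : ℕ) where
  mpref : Fin m → (Fin w ≃ Fin w)
  wrank : Fin w → Fin m → ℕ
  wrank_inj : ∀ q : Fin w, Function.Injective (wrank q)

namespace SM

variable {m w : ℕ} (S : SM m w)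

/-- The woman that man `i` proposes to in proposal vector `G`. -/
def rho (G : Fin m → Fin w) (i : Fin m) : Fin w := S.mpref i (G i)

/-- `(p, q)` is a blocking pair for proposal vector `G`: `p` strictly prefers `q` to the
woman he proposes to in `G`, and `q` strictly prefers `p` to every man proposing to
her in `G` (vacuously true if she receives no proposal in `G`). -/
def Blocking (G : Fin m → Fin w) (p : Fin m) (q : Fin w) : Prop :=
  (S.mpref p).symm q < G p ∧ ∀ j : Fin m, S.rho G j = q → S.wrank q p < S.wrank q j

/-- `G` is a man-saturating matching: all men propose to distinct women. -/
def Saturating (G : Fin m → Fin w) : Prop := Function.Injective (S.rho G)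

/-- `G` is a stable marriage: a man-saturating matching with no blocking pair. -/
def Stable (G : Fin m → Fin w) : Prop :=
  S.Saturating G ∧ ∀ p q, ¬ S.Blocking G p q

/-- `numw G`: the number of distinct women who receive a proposal in some proposal
vector less than or equal to `G` (i.e. women whose rank on some man `i`'s list
is at most `G i`). -/
def numw (G : Fin m → Fin w) : ℕ :=
  (Finset.univ.filter fun q : Fin w => ∃ i : Fin m, (S.mpref i).symm q ≤ G i).card

/-- Man `i` is forbidden in `G`: there is another man `j` such that either both propose
to the same woman in `G` and she prefers `j`, or `(j, ρ(G,i))` is a blocking pair in `G`. -/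
def Forbidden (G : Fin m → Fin w) (i : Fin m) : Prop :=
  ∃ j : Fin m, j ≠ i ∧
    ((S.rho G j = S.rho G i ∧ S.wrank (S.rho G i) j < S.wrank (S.rho G i) i) ∨
      S.Blocking G j (S.rho G i))

/-- Man `i` is rForbidden in `G`: there is a woman `q` whom `i` strictly prefers to his
current proposal and who strictly prefers `i` to every other man who has proposed to her
in any proposal vector `≤ G`. -/
def RForbidden (G : Fin m → Fin w) (i : Fin m) : Prop :=
  ∃ q : Fin w, (S.mpref i).symm q < G i ∧
    ∀ j : Fin m, j ≠ i → (S.mpref j).symm q ≤ G j → S.wrank q i < S.wrank q j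

end SM

/-- The `L¹` (Manhattan) distance between two proposal vectors. -/
def pdist {m w : ℕ} (G H : Fin m → Fin w) : ℕ :=
  ∑ i, Nat.dist (G i : ℕ) (H i : ℕ)

lemma SupClosed.exists_isGreatest_of_finite {α : Type*} [SemilatticeSup α] {s : Set α}
    (hs : SupClosed s) (hfin : s.Finite) (hne : s.Nonempty) : ∃ a, IsGreatest s a :=
  ⟨hfin.toFinset.sup' (by simpa using hne) id,
    hs.finsetSup'_mem _ fun _ ha => by simpa using ha,
    fun _ hb => le_sup' id (by simpa using hb)⟩

lemma pdist_le_pdist_of_le_of_le {m w : ℕ} {I G H : Fin m → Fin w} (hGH : G ≤ H)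
    (hHI : H ≤ I) :
    pdist I H ≤ pdist I G := by
  refine sum_le_sum fun i _ => ?_
  have hG : (G i : ℕ) ≤ H i := hGH i
  have hH : (H i : ℕ) ≤ I i := hHI i
  rw [Nat.dist_eq_sub_of_le_right hH, Nat.dist_eq_sub_of_le_right (hG.trans hH)]
  omega

namespace SM

variable {m w : ℕ} (S : SM m w) {G G' : Fin m → Fin w}

@[simp]
lemma symm_rho (G : Fin m → Fin w) (j : Fin m) : (S.mpref j).symm (S.rho G j) = G j :=
  Equiv.symm_apply_apply _ _

lemma rho_sup_of_le {p : Fin m} (h : G' p ≤ G p) : S.rho (G ⊔ G') p = S.rho G p := by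
  simp only [rho, Pi.sup_apply, sup_eq_left.2 h]

variable {S}

lemma Stable.exists_rho_eq_wrank_lt (hG : S.Stable G) {p : Fin m} {x : Fin w}
    (hp : (S.mpref p).symm x < G p) : ∃ j, S.rho G j = x ∧ S.wrank x j < S.wrank x p := by
  by_contra! hnone
  refine hG.2 p x ⟨hp, fun j hj => (hnone j hj).lt_of_ne fun he => ?_⟩
  obtain rfl := S.wrank_inj x he
  exact hp.ne (hj ▸ S.symm_rho G p)

lemma Stable.wrank_lt_of_rho_eq (hG : S.Stable G) {j p : Fin m} {x : Fin w}
    (hj : S.rho G j = x) (hp : (S.mpref p).symm x < G p) : S.wrank x j < S.wrank x p := by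
  obtain ⟨k, hk, hkp⟩ := hG.exists_rho_eq_wrank_lt hp
  obtain rfl := hG.1 (hk.trans hj.symm)
  exact hkp

lemma Stable.exists_rho_eq_of_lt (hG : S.Stable G) (hG' : S.Stable G') {i : Fin m}
    (hi : G' i < G i) : ∃ j, S.rho G j = S.rho G' i ∧ G' j < G j := by
  obtain ⟨j, hj, hji⟩ :=
    hG.exists_rho_eq_wrank_lt (p := i) (x := S.rho G' i) (by simpa using hi)
  refine ⟨j, hj, lt_of_not_ge fun hle => ?_⟩
  rcases hle.lt_or_eq with hlt | heq
  · have := hG'.wrank_lt_of_rho_eq (p := j) rfl (by rwa [← hj, symm_rho])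
    omega
  · obtain rfl : j = i := hG'.1 (by rw [← hj, rho, rho, heq])
    exact hi.ne' heq

lemma Stable.rho_ne_rho_of_lt_of_gt (hG : S.Stable G) (hG' : S.Stable G') {p q : Fin m}
    (hp : G' p < G p) (hq : G q < G' q) : S.rho G p ≠ S.rho G' q := by
  classical
  set D := univ.filter fun i => G' i < G i
  have hsub : D.image (S.rho G') ⊆ D.image (S.rho G) := by
    simp only [subset_iff, mem_image, mem_filter, mem_univ, true_and, D]
    rintro _ ⟨i, hi, rfl⟩
    obtain ⟨j, hj, hjlt⟩ := hG.exists_rho_eq_of_lt hG' hi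
    exact ⟨j, hjlt, hj⟩
  have himage : D.image (S.rho G') = D.image (S.rho G) :=
    eq_of_subset_of_card_le hsub <| by
      rw [card_image_of_injective _ hG.1, card_image_of_injective _ hG'.1]
  intro hpq
  have : S.rho G p ∈ D.image (S.rho G') := himage ▸ mem_image_of_mem _ (by simpa [D] using hp)
  obtain ⟨i, hi, hip⟩ := mem_image.1 this
  obtain rfl : i = q := hG'.1 (hip.trans hpq)
  exact (mem_filter.1 hi).2.not_gt hq

lemma Stable.eq_of_rho_eq_of_le_of_le (hG : S.Stable G) (hG' : S.Stable G') {p q : Fin m}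
    (hp : G' p ≤ G p) (hq : G q ≤ G' q) (hpq : S.rho G p = S.rho G' q) : p = q := by
  rcases hp.lt_or_eq with hp | hp
  · rcases hq.lt_or_eq with hq | hq
    · exact absurd hpq (hG.rho_ne_rho_of_lt_of_gt hG' hp hq)
    · exact (hG.1 (by rw [hpq, rho, rho, hq])).symm
  · exact hG'.1 (by rw [← hpq, rho, rho, hp])

lemma Stable.saturating_sup (hG : S.Stable G) (hG' : S.Stable G') : S.Saturating (G ⊔ G') := by
  intro p q hpq
  have hcomm : G ⊔ G' = G' ⊔ G := sup_comm _ _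
  rcases le_total (G' p) (G p) with hp | hp <;> rcases le_total (G' q) (G q) with hq | hq
  · exact hG.1 (by rwa [S.rho_sup_of_le hp, S.rho_sup_of_le hq] at hpq)
  · rw [S.rho_sup_of_le hp, hcomm, S.rho_sup_of_le hq] at hpq
    exact hG.eq_of_rho_eq_of_le_of_le hG' hp hq hpq
  · rw [hcomm, S.rho_sup_of_le hp, ← hcomm, S.rho_sup_of_le hq] at hpq
    exact hG'.eq_of_rho_eq_of_le_of_le hG hp hq hpq
  · exact hG'.1 (by rwa [hcomm, S.rho_sup_of_le hp, S.rho_sup_of_le hq] at hpq)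

lemma Stable.not_blocking_sup_of_le (hG : S.Stable G) (hG' : S.Stable G') {p : Fin m} {x : Fin w}
    (hp : G' p ≤ G p) : ¬ S.Blocking (G ⊔ G') p x := by
  rintro ⟨hpx, hblock⟩
  simp only [Pi.sup_apply, sup_eq_left.2 hp] at hpx
  obtain ⟨j, hj, hjp⟩ := hG.exists_rho_eq_wrank_lt hpx
  rcases le_or_gt (G' j) (G j) with hjle | hjlt
  · exact (hblock j (S.rho_sup_of_le hjle ▸ hj)).not_gt hjp
  obtain ⟨k, hk, hkj⟩ :=
    hG'.exists_rho_eq_wrank_lt (p := j) (x := x) (by rwa [← hj, symm_rho])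
  rcases le_or_gt (G k) (G' k) with hkle | hklt
  · have := hblock k (by rwa [sup_comm, S.rho_sup_of_le hkle])
    omega
  · have := hG.wrank_lt_of_rho_eq hj (p := k) (by rwa [← hk, symm_rho])
    omega

lemma Stable.sup (hG : S.Stable G) (hG' : S.Stable G') : S.Stable (G ⊔ G') := by
  refine ⟨hG.saturating_sup hG', fun p x => ?_⟩
  rcases le_total (G' p) (G p) with hp | hp
  · exact hG.not_blocking_sup_of_le hG' hp
  · rw [sup_comm]
    exact hG'.not_blocking_sup_of_le hG hp

lemma supClosed_setOf_stable_le (I : Fin m → Fin w) : SupClosed {G | S.Stable G ∧ G ≤ I} :=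
  fun _ hG _ hG' => ⟨hG.1.sup hG'.1, sup_le hG.2 hG'.2⟩

end SM

/-- If some stable marriage lies below `I`, then there is a unique greatest stable
marriage `H ≤ I`, and `H` minimizes the `L¹` distance to `I` among all stable
marriages `≤ I`. -/
theorem stmt11 {m w : ℕ} (S : SM m w) (I : Fin m → Fin w)
    (h : ∃ G' : Fin m → Fin w, S.Stable G' ∧ G' ≤ I) :
    ∃ H : Fin m → Fin w, S.Stable H ∧ H ≤ I ∧
      (∀ G' : Fin m → Fin w, S.Stable G' → G' ≤ I → G' ≤ H) ∧
      (∀ G' : Fin m → Fin w, S.Stable G' → G' ≤ I → pdist I H ≤ pdist I G') ∧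
      (∀ H' : Fin m → Fin w,
        (S.Stable H' ∧ H' ≤ I ∧ ∀ G' : Fin m → Fin w, S.Stable G' → G' ≤ I → G' ≤ H') →
        H' = H) := by
  obtain ⟨H, ⟨hH, hHI⟩, hgreatest⟩ :=
    (SM.supClosed_setOf_stable_le I).exists_isGreatest_of_finite (Set.toFinite _) h
  have hle : ∀ G', S.Stable G' → G' ≤ I → G' ≤ H :=
    fun G' hG' hG'I => hgreatest ⟨hG', hG'I⟩
  refine ⟨H, hH, hHI, hle,
    fun G' hG' hG'I => pdist_le_pdist_of_le_of_le (hle G' hG' hG'I) hHI, ?_⟩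
  rintro H' ⟨hH', hH'I, hle'⟩
  exact le_antisymm (hle H' hH' hH'I) (hle' H hH hHI)
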